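/- Under the same setup (γ_n positive, γ_n → 0, ∑γ_n = ∞; K a hyperrectangle; h bounded; r_n → 0; ∑γ_n e_n convergent; x_{n+1} = Π_K(x_n + γ_n(h(x_n)+e_n+r_n)); P_n the projection residuals), define Z_1(t) = ∑_{s=1}^k P_s on [t_{k-1}, t_k) and Z_n(t) = Z_1(t + t_{n-1}). If a subsequence (Z_{n_k}) converges uniformly on compact intervals to a function Z : [0,∞) → ℝ^d, then Z is Lipschitz continuous with Lipschitz constant at most (H+R)d, where H bounds |h| on K and R bounds sup_n |r_n|. -/

import Mathlib

/-!
Coordinatewise, the projection onto the box is a clamp to `[a j, b j]`, and `P` records what the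
clamp removes. On a block of indices `(p, q]`, let `m` be the last index at which the coordinate
is at least its value at the start of the block: after `m` it stays below that value, hence below
`b j`, so the clamp removes nothing from above there, while up to `m` the residuals telescope to at
most the drift `∑ γ i (h + r)` plus a partial sum of the noise `∑ γ i e i`; the bound from below is
symmetric. So the residual sum over the block is at most `(H + R)` times the elapsed time plus the
oscillation of the convergent series `∑ γ i e i`, and summing over the `d` coordinates costs the
factor `d`. Along the shifted interpolations the noise oscillation and the step size at the block
ends vanish, leaving the Lipschitz constant `(H + R) d` in the limit.
-/

open Filter Finset

open scoped ENNReal in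
theorem PiLp.norm_le_sum_norm {p : ℝ≥0∞} [Fact (1 ≤ p)] {ι : Type*} [Fintype ι]
    {β : ι → Type*} [∀ i, SeminormedAddCommGroup (β i)] (x : PiLp p β) :
    ‖x‖ ≤ ∑ i, ‖x i‖ := by
  classical
  have hx : x = ∑ i, PiLp.single p i (x i) := by
    ext j
    simp
  calc ‖x‖ = ‖∑ i, PiLp.single p i (x i)‖ := by rw [← hx]
    _ ≤ ∑ i, ‖PiLp.single p i (x i)‖ := norm_sum_le _ _
    _ = ∑ i, ‖x i‖ := by simp only [PiLp.norm_single]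

theorem abs_sub_max_min_lt {a b y w : ℝ} (hw : w ∈ Set.Icc a b) (hne : w ≠ max a (min b y)) :
    |y - max a (min b y)| < |y - w| := by
  obtain ⟨haw, hwb⟩ := hw
  rcases le_total y a with hya | hay
  · have hc : max a (min b y) = a := by
      rw [min_eq_right (hya.trans (haw.trans hwb)), max_eq_left hya]
    rw [hc] at hne ⊢
    rw [abs_of_nonpos (by linarith), abs_of_nonpos (by linarith)]
    linarith [lt_of_le_of_ne haw (Ne.symm hne)]
  rcases le_total y b with hyb | hby
  · have hc : max a (min b y) = y := by rw [min_eq_right hyb, max_eq_right hay]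
    rw [hc] at hne ⊢
    simpa using sub_ne_zero.mpr hne.symm
  · have hc : max a (min b y) = b := by
      rw [min_eq_left hby, max_eq_right (haw.trans hwb)]
    rw [hc] at hne ⊢
    rw [abs_of_nonneg (by linarith), abs_of_nonneg (by linarith)]
    linarith [lt_of_le_of_ne hwb hne]

theorem EuclideanSpace.norm_sub_update_lt {ι : Type*} [Fintype ι] [DecidableEq ι]
    {z w : EuclideanSpace ℝ ι} {j : ι} {c : ℝ} (h : |z j - c| < |z j - w j|) :
    ‖z - WithLp.toLp 2 (Function.update (WithLp.ofLp w) j c)‖ < ‖z - w‖ := by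
  have hsq : ‖z j - c‖ ^ 2 < ‖z j - w j‖ ^ 2 := pow_lt_pow_left₀ h (abs_nonneg _) two_ne_zero
  rw [EuclideanSpace.norm_eq, EuclideanSpace.norm_eq]
  refine Real.sqrt_lt_sqrt (by positivity) (sum_lt_sum (fun i _ => ?_) ⟨j, mem_univ j, ?_⟩)
  · rcases eq_or_ne i j with rfl | hij
    · simpa using hsq.le
    · simp [Function.update_of_ne hij]
  · simpa using hsq

theorem EuclideanSpace.apply_eq_max_min_of_isNearest_box {ι : Type*} [Fintype ι]
    {a b : ι → ℝ} {z w : EuclideanSpace ℝ ι} (hw : ∀ i, w i ∈ Set.Icc (a i) (b i))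
    (hmin : ∀ v : EuclideanSpace ℝ ι, (∀ i, v i ∈ Set.Icc (a i) (b i)) → ‖z - w‖ ≤ ‖z - v‖)
    (j : ι) : w j = max (a j) (min (b j) (z j)) := by
  classical
  by_contra hne
  set c := max (a j) (min (b j) (z j))
  have hc : c ∈ Set.Icc (a j) (b j) :=
    ⟨le_max_left _ _, max_le ((hw j).1.trans (hw j).2) (min_le_left _ _)⟩
  refine (hmin _ fun i => ?_).not_gt (norm_sub_update_lt (abs_sub_max_min_lt (hw j) hne))
  rcases eq_or_ne i j with rfl | hij
  · simpa only [PiLp.toLp_apply, Function.update_self] using hc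
  · simpa [Function.update_of_ne hij] using hw i

theorem sum_residual_le_of_clamped_above (σ c δ : ℕ → ℝ) {b ε : ℝ} {p q : ℕ} (hpq : p ≤ q)
    (hb : σ (p + 1) ≤ b)
    (hstep : ∀ i ∈ Ioc p q, σ (i + 1) < b → σ i + c i + δ i ≤ σ (i + 1))
    (hδ : ∀ m ∈ Icc p q, ∑ i ∈ Ioc p m, δ i ≤ ε) :
    ∑ i ∈ Ioc p q, (σ i + c i + δ i - σ (i + 1)) ≤ ∑ i ∈ Ioc p q, |c i| + ε := by
  set m := Nat.findGreatest (fun m => σ (p + 1) ≤ σ (m + 1)) q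
  have hpm : p ≤ m := Nat.le_findGreatest hpq le_rfl
  have hmq : m ≤ q := Nat.findGreatest_le q
  have hσm : σ (p + 1) ≤ σ (m + 1) :=
    Nat.findGreatest_spec (P := fun m => σ (p + 1) ≤ σ (m + 1)) hpq le_rfl
  have htail : ∑ i ∈ Ioc m q, (σ i + c i + δ i - σ (i + 1)) ≤ 0 := by
    refine sum_nonpos fun i hi => ?_
    obtain ⟨hmi, hiq⟩ := mem_Ioc.mp hi
    have hlt : σ (i + 1) < σ (p + 1) := not_le.mp (Nat.findGreatest_is_greatest hmi hiq)
    linarith [hstep i (mem_Ioc.mpr ⟨hpm.trans_lt hmi, hiq⟩) (hlt.trans_le hb)]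
  have hhead : ∑ i ∈ Ioc p m, (σ i + c i + δ i - σ (i + 1))
      = (σ (p + 1) - σ (m + 1)) + ∑ i ∈ Ioc p m, c i + ∑ i ∈ Ioc p m, δ i := by
    have htelescope : ∑ i ∈ Ioc p m, (σ i - σ (i + 1)) = σ (p + 1) - σ (m + 1) := by
      rw [← Ico_add_one_add_one_eq_Ioc, ← neg_sub, ← sum_Ico_sub σ (by omega : p + 1 ≤ m + 1),
        ← sum_neg_distrib]
      simp only [neg_sub]
    rw [← htelescope, ← sum_add_distrib, ← sum_add_distrib]
    exact sum_congr rfl fun i _ => by ring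
  have hc : ∑ i ∈ Ioc p m, c i ≤ ∑ i ∈ Ioc p q, |c i| :=
    (sum_le_sum fun i _ => le_abs_self (c i)).trans
      (sum_le_sum_of_subset_of_nonneg (Ioc_subset_Ioc_right hmq)
        fun i _ _ => abs_nonneg (c i))
  rw [← sum_Ioc_consecutive _ hpm hmq]
  linarith [hδ m (mem_Icc.mpr ⟨hpm, hmq⟩)]

theorem abs_sum_residual_le_of_clamped (σ c δ : ℕ → ℝ) {a b ε : ℝ} {p q : ℕ} (hpq : p ≤ q)
    (hσ : σ (p + 1) ∈ Set.Icc a b)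
    (hclamp : ∀ i ∈ Ioc p q, σ (i + 1) = max a (min b (σ i + c i + δ i)))
    (hδ : ∀ m ∈ Icc p q, |∑ i ∈ Ioc p m, δ i| ≤ ε) :
    |∑ i ∈ Ioc p q, (σ i + c i + δ i - σ (i + 1))| ≤ ∑ i ∈ Ioc p q, |c i| + ε := by
  have hup := sum_residual_le_of_clamped_above σ c δ hpq hσ.2 (fun i hi hlt => by
      rw [hclamp i hi] at hlt ⊢
      simp only [max_lt_iff, min_lt_iff, lt_self_iff_false, false_or] at hlt
      rw [min_eq_right hlt.2.le]
      exact le_max_right _ _)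
    fun m hm => (le_abs_self _).trans (hδ m hm)
  have hdown := sum_residual_le_of_clamped_above (-σ) (-c) (-δ) (ε := ε) hpq (neg_le_neg hσ.1)
    (fun i hi hlt => by
      simp only [Pi.neg_apply, neg_lt_neg_iff] at hlt ⊢
      rw [hclamp i hi] at hlt ⊢
      simp only [lt_max_iff, lt_self_iff_false, false_or] at hlt
      rw [max_eq_right hlt.le]
      linarith [min_le_right b (σ i + c i + δ i)])
    fun m hm => by simpa only [Pi.neg_apply, sum_neg_distrib] using (neg_le_abs _).trans (hδ m hm)
  simp only [Pi.neg_apply, abs_neg] at hdown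
  have hneg : ∑ i ∈ Ioc p q, (-σ i + -c i + -δ i - -σ (i + 1))
      = -∑ i ∈ Ioc p q, (σ i + c i + δ i - σ (i + 1)) := by
    rw [← sum_neg_distrib]
    exact sum_congr rfl fun i _ => by ring
  exact abs_le.mpr ⟨by linarith, hup⟩

theorem EuclideanSpace.norm_sum_residual_le_of_clamped {ι : Type*} [Fintype ι]
    (x c δ : ℕ → EuclideanSpace ℝ ι) (a b : ι → ℝ) (C : ℕ → ℝ) {ε : ℝ} {p q : ℕ} (hpq : p ≤ q)
    (hx : ∀ j, x (p + 1) j ∈ Set.Icc (a j) (b j))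
    (hclamp : ∀ i ∈ Ioc p q, ∀ j, x (i + 1) j = max (a j) (min (b j) ((x i + c i + δ i) j)))
    (hc : ∀ i ∈ Ioc p q, ‖c i‖ ≤ C i) (hδ : ∀ m ∈ Icc p q, ‖∑ i ∈ Ioc p m, δ i‖ ≤ ε) :
    ‖∑ i ∈ Ioc p q, (x i + c i + δ i - x (i + 1))‖ ≤
      Fintype.card ι * (∑ i ∈ Ioc p q, C i + ε) := by
  have hcoord (j : ι) : ‖(∑ i ∈ Ioc p q, (x i + c i + δ i - x (i + 1))) j‖ ≤
      ∑ i ∈ Ioc p q, C i + ε := by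
    have h := abs_sum_residual_le_of_clamped (fun i => x i j) (fun i => c i j) (fun i => δ i j)
      hpq (hx j) (fun i hi => by simpa using hclamp i hi j) fun m hm => by
        simpa [WithLp.ofLp_sum] using (PiLp.norm_apply_le _ j).trans (hδ m hm)
    simp only [WithLp.ofLp_sum, Finset.sum_apply, PiLp.sub_apply, PiLp.add_apply,
      Real.norm_eq_abs] at h ⊢
    refine h.trans (by gcongr with i hi; exact (PiLp.norm_apply_le (c i) j).trans (hc i hi))
  calc _ ≤ ∑ j, ‖(∑ i ∈ Ioc p q, (x i + c i + δ i - x (i + 1))) j‖ := PiLp.norm_le_sum_norm _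
    _ ≤ ∑ _j : ι, (∑ i ∈ Ioc p q, C i + ε) := sum_le_sum fun j _ => hcoord j
    _ = _ := by rw [sum_const, card_univ, nsmul_eq_mul]

theorem sum_Icc_one_sub_sum_Icc_one {G : Type*} [AddCommGroup G] (f : ℕ → G) {p q : ℕ}
    (hpq : p ≤ q) : ∑ i ∈ Icc 1 q, f i - ∑ i ∈ Icc 1 p, f i = ∑ i ∈ Ioc p q, f i := by
  have hIcc (n : ℕ) : Icc 1 n = Ioc 0 n := Icc_add_one_left_eq_Ioc 0 n
  rw [hIcc, hIcc, ← sum_Ioc_consecutive f (Nat.zero_le p) hpq, add_sub_cancel_left]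

theorem CauchySeq.eventually_norm_sum_Ioc_le {E : Type*} [SeminormedAddCommGroup E] {f : ℕ → E}
    (hf : CauchySeq fun n => ∑ k ∈ Icc 1 n, f k) {ε : ℝ} (hε : 0 < ε) :
    ∀ᶠ m in atTop, ∀ p q, m ≤ p → p ≤ q → ‖∑ i ∈ Ioc p q, f i‖ ≤ ε := by
  obtain ⟨N, hN⟩ := Metric.cauchySeq_iff.mp hf ε hε
  filter_upwards [eventually_ge_atTop N] with m hm p q hmp hpq
  rw [← sum_Icc_one_sub_sum_Icc_one f hpq, ← dist_eq_norm]
  exact (hN q (by omega) p (by omega)).le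

theorem exists_le_lt_succ {α : Type*} [LinearOrder α] {t : ℕ → α} {τ : α} (h0 : t 0 ≤ τ)
    (hex : ∃ n, τ < t n) : ∃ k, t k ≤ τ ∧ τ < t (k + 1) := by
  obtain ⟨k, hk⟩ : ∃ k, Nat.find hex = k + 1 :=
    Nat.exists_eq_add_one.mpr (Nat.pos_of_ne_zero fun h => (h ▸ Nat.find_spec hex).not_ge h0)
  exact ⟨k, not_lt.mp (Nat.find_min hex (by omega)), hk ▸ Nat.find_spec hex⟩

theorem exists_interp_sub_eq_sum_Ioc {G : Type*} [AddCommGroup G] (γ t : ℕ → ℝ) (P : ℕ → G)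
    (Y : ℝ → G) (hγ : ∀ n, 0 ≤ γ n) (ht : ∀ n, t n = ∑ k ∈ Icc 1 n, γ k)
    (htop : Tendsto t atTop atTop)
    (hY : ∀ k, 1 ≤ k → ∀ s : ℝ, t (k - 1) ≤ s → s < t k → Y s = ∑ i ∈ Icc 1 k, P i)
    {s u : ℝ} (hs : 0 ≤ s) (hsu : s ≤ u) (m : ℕ) :
    ∃ p q, m < p ∧ p ≤ q ∧ Y (u + t m) - Y (s + t m) = ∑ i ∈ Ioc p q, P i ∧
      ∑ i ∈ Ioc p q, γ i ≤ u - s + γ q := by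
  have hsucc : ∀ n, t (n + 1) = t n + γ (n + 1) := fun n => by
    rw [ht, ht, sum_Icc_succ_top (by omega)]
  have hmono : Monotone t := monotone_nat_of_le_succ fun n => by linarith [hsucc n, hγ (n + 1)]
  have ht0 : t 0 = 0 := by simp [ht]
  have hwin : ∀ τ, t m ≤ τ → ∃ k, t k ≤ τ ∧ τ < t (k + 1) ∧ Y τ = ∑ i ∈ Icc 1 (k + 1), P i :=
    fun τ hτ => by
      obtain ⟨k, hk, hk'⟩ := exists_le_lt_succ (ht0 ▸ (hmono (Nat.zero_le m)).trans hτ)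
        (htop.eventually_gt_atTop τ).exists
      exact ⟨k, hk, hk', hY (k + 1) (by omega) τ hk hk'⟩
  obtain ⟨k, hks, hks', hYs⟩ := hwin (s + t m) (by linarith)
  obtain ⟨l, hlu, hlu', hYu⟩ := hwin (u + t m) (by linarith)
  have hkl : k + 1 ≤ l + 1 := hmono.reflect_lt (by linarith)
  refine ⟨k + 1, l + 1, hmono.reflect_lt (by linarith), hkl, ?_, ?_⟩
  · rw [hYs, hYu, sum_Icc_one_sub_sum_Icc_one P hkl]
  · rw [← sum_Icc_one_sub_sum_Icc_one γ hkl, ← ht, ← ht]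
    linarith [hsucc l]

theorem norm_sub_le_mul_abs_of_tendsto {E ι : Type*} [SeminormedAddCommGroup E] {l : Filter ι}
    [l.NeBot] {F : ι → ℝ → E} {G : ℝ → E} {L : ℝ}
    (hF : ∀ τ, 0 ≤ τ → Tendsto (fun k => F k τ) l (nhds (G τ)))
    (hbound : ∀ s u, 0 ≤ s → s ≤ u → ∀ η > 0, ∀ᶠ k in l, ‖F k u - F k s‖ ≤ L * (u - s) + η)
    {s u : ℝ} (hs : 0 ≤ s) (hu : 0 ≤ u) : ‖G u - G s‖ ≤ L * |u - s| := by
  wlog hsu : s ≤ u generalizing s u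
  · rw [norm_sub_rev, abs_sub_comm]
    exact this hu hs (le_of_not_ge hsu)
  rw [abs_of_nonneg (sub_nonneg.2 hsu)]
  exact le_of_forall_pos_le_add fun η hη =>
    le_of_tendsto ((hF u hu).sub (hF s hs)).norm (hbound s u hs hsu η hη)

theorem eventually_norm_sub_le_of_clamped {ι : Type*} [Fintype ι]
    (x c δ P : ℕ → EuclideanSpace ℝ ι) (a b : ι → ℝ) (γ t : ℕ → ℝ) (Y : ℝ → EuclideanSpace ℝ ι)
    {M : ℝ} (hM : 0 ≤ M) (hγ : ∀ n, 0 ≤ γ n) (hγ0 : Tendsto γ atTop (nhds 0))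
    (ht : ∀ n, t n = ∑ k ∈ Icc 1 n, γ k) (htop : Tendsto t atTop atTop)
    (hx : ∀ n, 1 ≤ n → ∀ j, x n j ∈ Set.Icc (a j) (b j))
    (hclamp : ∀ n, 1 ≤ n → ∀ j, x (n + 1) j = max (a j) (min (b j) ((x n + c n + δ n) j)))
    (hc : ∀ n, 1 ≤ n → ‖c n‖ ≤ γ n * M) (hδ : CauchySeq fun n => ∑ k ∈ Icc 1 n, δ k)
    (hP : ∀ n, P n = x n + c n + δ n - x (n + 1))
    (hY : ∀ k, 1 ≤ k → ∀ s : ℝ, t (k - 1) ≤ s → s < t k → Y s = ∑ i ∈ Icc 1 k, P i)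
    {s u : ℝ} (hs : 0 ≤ s) (hsu : s ≤ u) {η : ℝ} (hη : 0 < η) :
    ∀ᶠ m in atTop, ‖Y (u + t m) - Y (s + t m)‖ ≤ M * Fintype.card ι * (u - s) + η := by
  set κ : ℝ := (Fintype.card ι : ℝ)
  obtain ⟨ε, hε, hεη⟩ : ∃ ε > 0, κ * (M + 1) * ε ≤ η := by
    refine ⟨η / (κ * (M + 1) + 1), by positivity, ?_⟩
    rw [mul_div_assoc', div_le_iff₀ (by positivity)]
    nlinarith
  filter_upwards [hδ.eventually_norm_sum_Ioc_le hε,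
    eventually_forall_ge_atTop.2 (hγ0.eventually (ge_mem_nhds hε))] with m hδm hγm
  obtain ⟨p, q, hmp, hpq, hYpq, hγpq⟩ := exists_interp_sub_eq_sum_Ioc γ t P Y hγ ht htop hY hs hsu m
  have hres := EuclideanSpace.norm_sum_residual_le_of_clamped x c δ a b (fun i => γ i * M) hpq
    (hx (p + 1) (by omega)) (fun i hi => hclamp i (Nat.one_le_of_lt (mem_Ioc.mp hi).1))
    (fun i hi => hc i (Nat.one_le_of_lt (mem_Ioc.mp hi).1))
    fun l hl => hδm p l hmp.le (mem_Icc.mp hl).1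
  rw [hYpq, sum_congr rfl fun i _ => hP i]
  calc _ ≤ κ * (∑ i ∈ Ioc p q, γ i * M + ε) := hres
    _ ≤ κ * ((u - s + ε) * M + ε) := by
      rw [← sum_mul]
      gcongr
      linarith [hγm q (by omega)]
    _ = M * κ * (u - s) + κ * (M + 1) * ε := by ring
    _ ≤ M * κ * (u - s) + η := by linarith

theorem stmt7_general (d : ℕ) (γ : ℕ → ℝ)
    (e r : ℕ → EuclideanSpace ℝ (Fin d))
    (a b : Fin d → ℝ)
    (K : Set (EuclideanSpace ℝ (Fin d)))
    (hK : K = {z : EuclideanSpace ℝ (Fin d) | ∀ i, z i ∈ Set.Icc (a i) (b i)})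
    (hfun : EuclideanSpace ℝ (Fin d) → EuclideanSpace ℝ (Fin d))
    (H : ℝ) (hH : ∀ z ∈ K, ‖hfun z‖ ≤ H)
    (R : ℝ) (hR : ∀ n, ‖r n‖ ≤ R)
    (hγpos : ∀ n, 0 < γ n) (hγ0 : Tendsto γ atTop (nhds 0))
    (hγdiv : Tendsto (fun n => ∑ k ∈ Finset.Icc 1 n, γ k) atTop atTop)
    (he : ∃ L, Tendsto (fun n => ∑ k ∈ Finset.Icc 1 n, γ k • e k) atTop (nhds L))
    (proj : EuclideanSpace ℝ (Fin d) → EuclideanSpace ℝ (Fin d))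
    (hproj : ∀ z, proj z ∈ K ∧ ∀ w ∈ K, ‖z - proj z‖ ≤ ‖z - w‖)
    (x : ℕ → EuclideanSpace ℝ (Fin d)) (hx1 : x 1 ∈ K)
    (hrec : ∀ n, 1 ≤ n → x (n + 1) = proj (x n + γ n • (hfun (x n) + e n + r n)))
    (P : ℕ → EuclideanSpace ℝ (Fin d))
    (hP : ∀ n, P n = x n + γ n • (hfun (x n) + e n + r n) - x (n + 1))
    (t : ℕ → ℝ) (ht : ∀ n, t n = ∑ k ∈ Finset.Icc 1 n, γ k)
    (Z : ℕ → ℝ → EuclideanSpace ℝ (Fin d))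
    (hZ1 : ∀ k, 1 ≤ k → ∀ s : ℝ, t (k - 1) ≤ s → s < t k →
      Z 1 s = ∑ i ∈ Finset.Icc 1 k, P i)
    (hZn : ∀ n, 1 ≤ n → ∀ s : ℝ, Z n s = Z 1 (s + t (n - 1)))
    (φ : ℕ → ℕ) (hφ : StrictMono φ)
    (Zlim : ℝ → EuclideanSpace ℝ (Fin d))
    (hconv : ∀ T > (0:ℝ),
      TendstoUniformlyOn (fun k => Z (φ k)) Zlim atTop (Set.Icc 0 T)) :
    ∀ s u : ℝ, 0 ≤ s → 0 ≤ u →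
      ‖Zlim u - Zlim s‖ ≤ (H + R) * d * |u - s| := by
  subst hK
  obtain ⟨L, hL⟩ := he
  have hsplit (n : ℕ) : x n + γ n • (hfun (x n) + e n + r n)
      = x n + γ n • (hfun (x n) + r n) + γ n • e n := by
    rw [add_right_comm (hfun (x n)) (e n), smul_add, add_assoc]
  have hbox (n : ℕ) (hn : 1 ≤ n) : ∀ j, x n j ∈ Set.Icc (a j) (b j) := by
    induction n, hn using Nat.le_induction with
    | base => exact hx1
    | succ n hn _ => rw [hrec n hn]; exact (hproj _).1
  have hclamp (n : ℕ) (hn : 1 ≤ n) (j : Fin d) : x (n + 1) j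
      = max (a j) (min (b j) ((x n + γ n • (hfun (x n) + r n) + γ n • e n) j)) := by
    rw [← hsplit, hrec n hn]
    exact EuclideanSpace.apply_eq_max_min_of_isNearest_box (hproj _).1 (hproj _).2 j
  have hdrift (n : ℕ) (hn : 1 ≤ n) : ‖γ n • (hfun (x n) + r n)‖ ≤ γ n * (H + R) := by
    rw [norm_smul, Real.norm_of_nonneg (hγpos n).le]
    exact mul_le_mul_of_nonneg_left ((norm_add_le _ _).trans
      (add_le_add (hH _ (hbox n hn)) (hR n))) (hγpos n).le
  have hHR : 0 ≤ H + R :=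
    add_nonneg ((norm_nonneg _).trans (hH _ (hproj 0).1)) ((norm_nonneg _).trans (hR 0))
  have hshift : Tendsto (fun k => φ k - 1) atTop atTop :=
    (tendsto_sub_atTop_nat 1).comp hφ.tendsto_atTop
  intro s u hs hu
  refine norm_sub_le_mul_abs_of_tendsto (fun τ hτ => (hconv (τ + 1) (by linarith)).tendsto_at
    ⟨hτ, by linarith⟩) (fun s u hs hsu η hη => ?_) hs hu
  filter_upwards [hshift.eventually (eventually_norm_sub_le_of_clamped x _ _ P a b γ t (Z 1) hHR
    (fun n => (hγpos n).le) hγ0 ht ((tendsto_congr ht).2 hγdiv) hbox hclamp hdrift hL.cauchySeq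
    (fun n => by rw [hP, hsplit]) hZ1 hs hsu hη), eventually_ge_atTop 1] with k hk hk1
  rw [hZn _ (hk1.trans (hφ.id_le k)), hZn _ (hk1.trans (hφ.id_le k))]
  simpa using hk

/-- Any uniform-on-compacts limit of the shifted accumulated-projection
interpolations is Lipschitz with constant `(H + R) * d`. -/
theorem stmt7 (d : ℕ) (γ : ℕ → ℝ)
    (e r : ℕ → EuclideanSpace ℝ (Fin d))
    (a b : Fin d → ℝ) (hab : ∀ i, a i < b i)
    (K : Set (EuclideanSpace ℝ (Fin d)))
    (hK : K = {z : EuclideanSpace ℝ (Fin d) | ∀ i, z i ∈ Set.Icc (a i) (b i)})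
    (hfun : EuclideanSpace ℝ (Fin d) → EuclideanSpace ℝ (Fin d))
    (H : ℝ) (hH : ∀ z ∈ K, ‖hfun z‖ ≤ H)
    (R : ℝ) (hR : ∀ n, ‖r n‖ ≤ R)
    (hγpos : ∀ n, 0 < γ n) (hγ0 : Tendsto γ atTop (nhds 0))
    (hγdiv : Tendsto (fun n => ∑ k ∈ Finset.Icc 1 n, γ k) atTop atTop)
    (hr : Tendsto r atTop (nhds 0))
    (he : ∃ L, Tendsto (fun n => ∑ k ∈ Finset.Icc 1 n, γ k • e k) atTop (nhds L))
    (proj : EuclideanSpace ℝ (Fin d) → EuclideanSpace ℝ (Fin d))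
    (hproj : ∀ z, proj z ∈ K ∧ ∀ w ∈ K, ‖z - proj z‖ ≤ ‖z - w‖)
    (x : ℕ → EuclideanSpace ℝ (Fin d)) (hx1 : x 1 ∈ K)
    (hrec : ∀ n, 1 ≤ n → x (n + 1) = proj (x n + γ n • (hfun (x n) + e n + r n)))
    (P : ℕ → EuclideanSpace ℝ (Fin d))
    (hP : ∀ n, P n = x n + γ n • (hfun (x n) + e n + r n) - x (n + 1))
    (t : ℕ → ℝ) (ht : ∀ n, t n = ∑ k ∈ Finset.Icc 1 n, γ k)
    (Z : ℕ → ℝ → EuclideanSpace ℝ (Fin d))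
    (hZ1 : ∀ k, 1 ≤ k → ∀ s : ℝ, t (k - 1) ≤ s → s < t k →
      Z 1 s = ∑ i ∈ Finset.Icc 1 k, P i)
    (hZn : ∀ n, 1 ≤ n → ∀ s : ℝ, Z n s = Z 1 (s + t (n - 1)))
    (φ : ℕ → ℕ) (hφ : StrictMono φ)
    (Zlim : ℝ → EuclideanSpace ℝ (Fin d))
    (hconv : ∀ T > (0:ℝ),
      TendstoUniformlyOn (fun k => Z (φ k)) Zlim atTop (Set.Icc 0 T)) :
    ∀ s u : ℝ, 0 ≤ s → 0 ≤ u →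
      ‖Zlim u - Zlim s‖ ≤ (H + R) * d * |u - s| :=
  stmt7_general d γ e r a b K hK hfun H hH R hR hγpos hγ0 hγdiv he proj hproj x hx1 hrec P hP t ht Z
    hZ1 hZn φ hφ Zlim hconv
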